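/- arXiv:1703.00080 — 4 statements merged into one kernel-verified Lean document; each statement's English description precedes it below -/
import Mathlib

section
/- Score-bound early termination is correct: let S be a finite set of Boolean tuples over m attributes and t a Boolean tuple. (i) If F(s) ≤ F(t) for every s ∈ S, then no member of S dominates t. (ii) If F(t) ≤ F(s) for every s ∈ S, then t dominates no member of S. (Hence subtrees whose maxScore is below the current score cannot contain dominators of t, and subtrees whose minScore is above the current score cannot contain tuples dominated by t.) -/
/-- Tuple `t` dominates `t'`: `t` is at least as good on every attribute and
strictly better on at least one. -/
def dominates {m : ℕ} (t t' : Fin m → ℕ) : Prop :=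
  (∀ i, t' i ≤ t i) ∧ ∃ i, t' i < t i

/-- A Boolean tuple has every attribute value in `{0, 1}`. -/
def IsBoolean {m : ℕ} (t : Fin m → ℕ) : Prop :=
  ∀ i, t i = 0 ∨ t i = 1

/-- The binary score `F(t) = Σ_{i<m} 2^i · t i`. -/
def score {m : ℕ} (t : Fin m → ℕ) : ℕ :=
  ∑ i : Fin m, 2 ^ (i : ℕ) * t i

lemma score_lt_score_of_dominates {m : ℕ} {t t' : Fin m → ℕ} (h : dominates t t') :
    score t' < score t := by
  obtain ⟨hle, i, hlt⟩ := h
  exact Finset.sum_lt_sum (fun j _ => Nat.mul_le_mul_left _ (hle j))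
    ⟨i, Finset.mem_univ i, Nat.mul_lt_mul_of_pos_left hlt (Nat.two_pow_pos _)⟩

theorem score_bound_early_termination_general {m : ℕ} (S : Finset (Fin m → ℕ))
    (t : Fin m → ℕ) :
    ((∀ s ∈ S, score s ≤ score t) → ∀ s ∈ S, ¬ dominates s t) ∧
    ((∀ s ∈ S, score t ≤ score s) → ∀ s ∈ S, ¬ dominates t s) :=
  ⟨fun h s hs hd => (score_lt_score_of_dominates hd).not_ge (h s hs),
   fun h s hs hd => (score_lt_score_of_dominates hd).not_ge (h s hs)⟩

/-- Score-bound early termination is correct: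
(i) if every score in `S` is at most `F(t)`, no member of `S` dominates `t`;
(ii) if `F(t)` is at most every score in `S`, then `t` dominates no member of `S`. -/
theorem score_bound_early_termination {m : ℕ} (S : Finset (Fin m → ℕ))
    (t : Fin m → ℕ) (ht : IsBoolean t) (hS : ∀ s ∈ S, IsBoolean s) :
    ((∀ s ∈ S, score s ≤ score t) → ∀ s ∈ S, ¬ dominates s t) ∧
    ((∀ s ∈ S, score t ≤ score s) → ∀ s ∈ S, ¬ dominates t s) :=
  score_bound_early_termination_general S t
end

section
/- The TA-SKY stopping condition is correct: let D be a finite set of tuples over m attributes, let Seen ⊆ D, and let c be a threshold tuple such that every tuple t ∈ D \ Seen satisfies t i ≤ c i for every attribute i (as guaranteed by descending sorted access). If some tuple s ∈ Seen dominates c, then s dominates every tuple in D \ Seen; consequently the skyline S(D) is contained in Seen, and TA-SKY can stop without accessing the remaining tuples. -/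
/-- The skyline of a finite set `D` of tuples: members of `D` not dominated by
any member of `D`. -/
def skyline {m : ℕ} (D : Finset (Fin m → ℕ)) : Set (Fin m → ℕ) :=
  {t | t ∈ D ∧ ∀ s ∈ D, ¬ dominates s t}

theorem dominates_of_dominates_of_le {m : ℕ} {s c t : Fin m → ℕ}
    (hdom : dominates s c) (htc : t ≤ c) : dominates s t :=
  ⟨fun i => (htc i).trans (hdom.1 i),
    let ⟨i, hi⟩ := hdom.2; ⟨i, (htc i).trans_lt hi⟩⟩

theorem skyline_subset_of_dominated {m : ℕ} {D : Finset (Fin m → ℕ)} {S : Set (Fin m → ℕ)}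
    (h : ∀ t ∈ D, t ∉ S → ∃ s ∈ D, dominates s t) : skyline D ⊆ S := by
  intro t ⟨htD, hundom⟩
  by_contra htS
  obtain ⟨s, hsD, hst⟩ := h t htD htS
  exact hundom s hsD hst

/-- The TA-SKY stopping condition is correct: if every unseen tuple is bounded
above by the threshold tuple `c` on every attribute, and some seen tuple `s`
dominates `c`, then `s` dominates every unseen tuple; consequently the skyline
of `D` is contained in `Seen`. -/
theorem tasky_stopping_condition {m : ℕ} (D Seen : Finset (Fin m → ℕ))
    (hsub : Seen ⊆ D) (c : Fin m → ℕ)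
    (hc : ∀ t ∈ D, t ∉ Seen → ∀ i, t i ≤ c i)
    (s : Fin m → ℕ) (hs : s ∈ Seen) (hdom : dominates s c) :
    (∀ t ∈ D, t ∉ Seen → dominates s t) ∧ (∀ t ∈ skyline D, t ∈ Seen) := by
  have hunseen : ∀ t ∈ D, t ∉ Seen → dominates s t := fun t htD htS =>
    dominates_of_dominates_of_le hdom (hc t htD htS)
  refine ⟨hunseen, fun t ht => skyline_subset_of_dominated (S := ↑Seen) ?_ ht⟩
  exact fun t htD htS => ⟨s, hsub hs, hunseen t htD htS⟩
end

section
/- TA-SKY is progressive: let D be a finite set of tuples over m attributes, let Seen ⊆ D, and let c be a threshold tuple such that every tuple u ∈ D \ Seen satisfies u i ≤ c i for every attribute i. If a tuple t ∈ Seen is not dominated by any member of Seen and c does not dominate t, then t belongs to the skyline S(D) (so such tuples may be output as skyline answers before the algorithm terminates). -/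
theorem dominates.trans_le {m : ℕ} {s t c : Fin m → ℕ} (hst : dominates s t) (hsc : s ≤ c) :
    dominates c t :=
  ⟨fun i => (hst.1 i).trans (hsc i), hst.2.imp fun i hi => hi.trans_le (hsc i)⟩

/-- TA-SKY is progressive: if every unseen tuple is bounded above by the
threshold tuple `c` on every attribute, and a seen tuple `t` is dominated
neither by any seen tuple nor by `c`, then `t` is in the skyline of `D`. -/
theorem tasky_progressive {m : ℕ} (D Seen : Finset (Fin m → ℕ))
    (hsub : Seen ⊆ D) (c : Fin m → ℕ)
    (hc : ∀ u ∈ D, u ∉ Seen → ∀ i, u i ≤ c i)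
    (t : Fin m → ℕ) (ht : t ∈ Seen)
    (hnd : ∀ u ∈ Seen, ¬ dominates u t) (hcnd : ¬ dominates c t) :
    t ∈ skyline D := by
  refine ⟨hsub ht, fun s hs hst => ?_⟩
  by_cases hseen : s ∈ Seen
  · exact hnd s hseen hst
  · exact hcnd (hst.trans_le (hc s hs hseen))
end

section
/- Probability of dominating the maximal unseen combination: let X be a random Boolean tuple over m attributes with independent coordinates where P(X j = 1) = p_j, let Z be a nonempty subset of the attributes, and let v be the Boolean tuple with v i = 0 for i ∈ Z and v i = 1 for i ∉ Z. Then the probability that X dominates v equals (Π_{j∉Z} p_j) · (1 − Π_{j∈Z} (1 − p_j)). -/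
/-!
Domination of `v` is the strict order `v < X` of `Fin m → ℕ`, and `Set.Ioi v` is the box
`Set.Ici v` with the point `v` removed. Under the product measure the box has probability
`∏_{j∉Z} p_j` (coordinates in `Z` are unconstrained) and the point has probability
`∏_{j∉Z} p_j · ∏_{j∈Z} (1 - p_j)`; subtracting gives the formula.
-/

open MeasureTheory

/-- The Bernoulli distribution with parameter `p` on `ℕ`, supported on
`{0, 1}` with `P(1) = p`. -/
noncomputable def bernoulliNat (p : ENNReal) (hp : p ≤ 1) : Measure ℕ :=
  ((PMF.bernoulli p.toNNReal (by simpa using ENNReal.toNNReal_mono ENNReal.one_ne_top hp)).map (fun b => if b then 1 else 0)).toMeasure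

theorem dominates_iff_lt {m : ℕ} {t t' : Fin m → ℕ} : dominates t t' ↔ t' < t :=
  Pi.lt_def.symm

theorem MeasureTheory.Measure.pi_Ioi {ι : Type*} [Fintype ι] {α : ι → Type*}
    [∀ i, MeasurableSpace (α i)] [∀ i, MeasurableSingletonClass (α i)] [∀ i, PartialOrder (α i)]
    (μ : ∀ i, Measure (α i)) [∀ i, IsFiniteMeasure (μ i)] (v : ∀ i, α i) :
    Measure.pi μ (Set.Ioi v) = ∏ i, μ i (Set.Ici (v i)) - ∏ i, μ i {v i} := by
  rw [← Set.Ici_sdiff_left, measure_sdiff (by simp) (MeasurableSet.singleton v).nullMeasurableSet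
    (measure_ne_top _ _), ← Set.pi_univ_Ici, ← Set.univ_pi_singleton, Measure.pi_pi, Measure.pi_pi]

section bernoulliNat

variable (p : ENNReal) (hp : p ≤ 1)

instance : IsProbabilityMeasure (bernoulliNat p hp) := by
  unfold bernoulliNat; infer_instance

theorem bernoulliNat_singleton_zero : bernoulliNat p hp {0} = 1 - p := by
  rw [bernoulliNat, PMF.toMeasure_apply_singleton _ _ (.singleton _), PMF.map_apply, tsum_bool]
  simpa using (PMF.bernoulli_apply _ false).trans
    (by simp [ne_top_of_le_ne_top ENNReal.one_ne_top hp])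

theorem bernoulliNat_singleton_one : bernoulliNat p hp {1} = p := by
  rw [bernoulliNat, PMF.toMeasure_apply_singleton _ _ (.singleton _), PMF.map_apply, tsum_bool]
  simpa using (PMF.bernoulli_apply _ true).trans
    (by simp [ne_top_of_le_ne_top ENNReal.one_ne_top hp])

theorem bernoulliNat_Ici_one : bernoulliNat p hp (Set.Ici 1) = p := by
  have : Set.Ici 1 = ({0}ᶜ : Set ℕ) := by ext n; simp [Nat.one_le_iff_ne_zero]
  rw [this, prob_compl_eq_one_sub (.singleton 0), bernoulliNat_singleton_zero,
    ENNReal.sub_sub_cancel ENNReal.one_ne_top hp]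

end bernoulliNat

theorem prob_dominates_max_unseen_general {m : ℕ} (p : Fin m → ENNReal)
    (hp : ∀ j, p j ≤ 1) (Z : Finset (Fin m)) :
    Measure.pi (fun j => bernoulliNat (p j) (hp j))
      {X | dominates X (fun i => if i ∈ Z then (0 : ℕ) else 1)} =
      (∏ j ∈ Zᶜ, p j) * (1 - ∏ j ∈ Z, (1 - p j)) := by
  classical
  have hset : {X | dominates X (fun i => if i ∈ Z then (0 : ℕ) else 1)} =
      Set.Ioi (fun i => if i ∈ Z then (0 : ℕ) else 1) := Set.ext fun _ => dominates_iff_lt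
  have hIci (j : Fin m) : bernoulliNat (p j) (hp j) (Set.Ici (if j ∈ Z then 0 else 1)) =
      if j ∈ Z then 1 else p j := by
    split_ifs <;> simp [bernoulliNat_Ici_one]
  have hsingleton (j : Fin m) : bernoulliNat (p j) (hp j) {if j ∈ Z then 0 else 1} =
      if j ∈ Z then 1 - p j else p j := by
    split_ifs <;> simp [bernoulliNat_singleton_zero, bernoulliNat_singleton_one]
  have hcompl : Finset.univ.filter (· ∉ Z) = Zᶜ := by ext; simp
  have hne_top : ∏ j ∈ Zᶜ, p j ≠ ⊤ :=
    ne_top_of_le_ne_top ENNReal.one_ne_top (Finset.prod_le_one' fun j _ => hp j)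
  rw [hset, Measure.pi_Ioi]
  simp only [hIci, hsingleton, Finset.prod_ite, Finset.filter_univ_mem, hcompl,
    Finset.prod_const_one, one_mul]
  rw [ENNReal.mul_sub fun _ _ => hne_top, mul_one, mul_comm]

/-- Probability of dominating the maximal unseen combination: for a random
Boolean tuple `X` with independent coordinates, `P(X j = 1) = p j`, a nonempty
attribute set `Z`, and `v` the Boolean tuple that is `0` on `Z` and `1` off
`Z`, the probability that `X` dominates `v` is
`(Π_{j∉Z} p_j) · (1 − Π_{j∈Z} (1 − p_j))`. -/
theorem prob_dominates_max_unseen {m : ℕ} (p : Fin m → ENNReal)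
    (hp : ∀ j, p j ≤ 1) (Z : Finset (Fin m)) (hZ : Z.Nonempty) :
    Measure.pi (fun j => bernoulliNat (p j) (hp j))
      {X | dominates X (fun i => if i ∈ Z then (0 : ℕ) else 1)} =
      (∏ j ∈ Zᶜ, p j) * (1 - ∏ j ∈ Z, (1 - p j)) :=
  prob_dominates_max_unseen_general p hp Z
end
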